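/- arXiv:2005.14076 — 7 statements merged into one kernel-verified Lean document; each statement's English description precedes it below -/
import Mathlib

section
/- Let Γ be a signed graph with a cut edge uv, and let x be a unit eigenvector corresponding to the largest eigenvalue λ(Γ) of the adjacency matrix A(Γ). Then σ(uv)·x_u·x_v ≥ 0. -/
open scoped Matrix

structure SignedGraph (n : ℕ) where
  sign : Fin n → Fin n → ℝ
  symm : ∀ i j, sign i j = sign j i
  loopless : ∀ i, sign i i = 0
  vals : ∀ i j, sign i j = 0 ∨ sign i j = 1 ∨ sign i j = -1

/-- The adjacency matrix of a signed graph. -/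
def SignedGraph.adj {n : ℕ} (Γ : SignedGraph n) : Matrix (Fin n) (Fin n) ℝ :=
  Matrix.of Γ.sign

/-- The underlying simple graph of a signed graph. -/
def SignedGraph.graph {n : ℕ} (Γ : SignedGraph n) : SimpleGraph (Fin n) where
  Adj i j := Γ.sign i j ≠ 0
  symm := ⟨by intro i j h; rwa [Γ.symm j i]⟩
  loopless := ⟨by intro i h; exact h (Γ.loopless i)⟩

/-- `lam` is the index (largest eigenvalue) of the signed graph `Γ`. -/
def SignedGraph.IsIndex {n : ℕ} (Γ : SignedGraph n) (lam : ℝ) : Prop :=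
  (∃ y : Fin n → ℝ, y ≠ 0 ∧ Γ.adj.mulVec y = lam • y) ∧
  ∀ μ : ℝ, (∃ y : Fin n → ℝ, y ≠ 0 ∧ Γ.adj.mulVec y = μ • y) → μ ≤ lam

/-- Rayleigh-type bound: if `lam` dominates all (real) eigenvalues of a symmetric real
matrix `A`, then `w ⬝ᵥ A *ᵥ w ≤ lam * (w ⬝ᵥ w)` for every vector `w`. -/
lemma rayleigh_bound {n : ℕ} (A : Matrix (Fin n) (Fin n) ℝ) (hA : A.IsHermitian)
    (lam : ℝ) (hlam : ∀ μ : ℝ, (∃ y : Fin n → ℝ, y ≠ 0 ∧ A.mulVec y = μ • y) → μ ≤ lam)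
    (w : Fin n → ℝ) : w ⬝ᵥ A *ᵥ w ≤ lam * (w ⬝ᵥ w) := by
  classical
  set B : Matrix (Fin n) (Fin n) ℝ := lam • (1 : Matrix (Fin n) (Fin n) ℝ) - A with hBdef
  have hB : B.IsHermitian := by
    have := hA.eq
    simp only [hBdef, Matrix.IsHermitian, Matrix.conjTranspose_sub, Matrix.conjTranspose_smul,
      Matrix.conjTranspose_one, this, star_trivial]
  have hev : ∀ i, 0 ≤ hB.eigenvalues i := by
    intro i
    have he := hB.mulVec_eigenvectorBasis i
    set μ := hB.eigenvalues i with hμ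
    set e : Fin n → ℝ := ⇑(hB.eigenvectorBasis i) with hedef
    have hne : e ≠ 0 := by
      intro h
      exact hB.eigenvectorBasis.toBasis.ne_zero i (by ext j; exact congrFun h j)
    have hAe : A.mulVec e = (lam - μ) • e := by
      have h1 : lam • e - A.mulVec e = μ • e := by
        simpa [hBdef, Matrix.sub_mulVec, Matrix.smul_mulVec, Matrix.one_mulVec] using he
      have h2 := sub_eq_iff_eq_add.mp h1
      rw [sub_smul, h2]
      abel
    have := hlam (lam - μ) ⟨e, hne, hAe⟩
    linarith
  have hpsd := hB.posSemidef_iff_eigenvalues_nonneg.mpr hev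
  have h0 := hpsd.dotProduct_mulVec_nonneg w
  have hstar : (star w : Fin n → ℝ) = w := by simp
  rw [hstar] at h0
  have heq : w ⬝ᵥ B *ᵥ w = lam * (w ⬝ᵥ w) - w ⬝ᵥ A *ᵥ w := by
    simp [hBdef, Matrix.sub_mulVec, Matrix.smul_mulVec, Matrix.one_mulVec,
      dotProduct_sub, dotProduct_smul, smul_eq_mul]
  rw [heq] at h0
  linarith

/-- If `uv` is a cut edge of a signed graph `Γ` and `x` is a unit eigenvector for the
index `λ(Γ)`, then `σ(uv)·x_u·x_v ≥ 0`. -/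
theorem stmt_1 {n : ℕ} (Γ : SignedGraph n) (u v : Fin n)
    (hadj : Γ.graph.Adj u v)
    (hcut : ¬ (Γ.graph.deleteEdges {s(u, v)}).Reachable u v)
    (lam : ℝ) (hlam : Γ.IsIndex lam)
    (x : Fin n → ℝ) (hunit : ∑ i, x i ^ 2 = 1)
    (heig : Γ.adj.mulVec x = lam • x) :
    0 ≤ Γ.sign u v * x u * x v := by
  classical
  have huv : u ≠ v := Γ.graph.ne_of_adj hadj
  have hA : Γ.adj.IsHermitian := by
    ext i j
    simp [SignedGraph.adj, Γ.symm i j]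
  set R : Fin n → Prop := fun i => (Γ.graph.deleteEdges {s(u, v)}).Reachable u i with hRdef
  have hRu : R u := SimpleGraph.Reachable.refl u
  have hRv : ¬ R v := hcut
  -- crossing edges must be the cut edge
  have crossing : ∀ i j, R i → ¬ R j → Γ.sign i j ≠ 0 → i = u ∧ j = v := by
    intro i j hi hj hz
    have hij : Γ.graph.Adj i j := hz
    by_cases hs : s(i, j) = s(u, v)
    · rw [Sym2.eq_iff] at hs
      rcases hs with ⟨rfl, rfl⟩ | ⟨rfl, rfl⟩
      · exact ⟨rfl, rfl⟩
      · exact absurd hi hcut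
    · have hadj' : (Γ.graph.deleteEdges {s(u, v)}).Adj i j := by
        rw [SimpleGraph.deleteEdges_adj]
        exact ⟨hij, by simpa using hs⟩
      exact absurd (hi.trans hadj'.reachable) hj
  set y : Fin n → ℝ := fun i => if R i then -x i else x i with hydef
  have expand : ∀ w : Fin n → ℝ,
      w ⬝ᵥ Γ.adj *ᵥ w = ∑ i, ∑ j, w i * (Γ.sign i j * w j) := by
    intro w
    simp [dotProduct, Matrix.mulVec, SignedGraph.adj, Finset.mul_sum]
  have key : ∀ i j, y i * (Γ.sign i j * y j) =
      x i * (Γ.sign i j * x j)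
        - ((if i = u ∧ j = v then 2 * (Γ.sign i j * x i * x j) else 0)
            + (if i = v ∧ j = u then 2 * (Γ.sign i j * x i * x j) else 0)) := by
    intro i j
    by_cases hi : R i <;> by_cases hj : R j
    · have h1 : ¬ (i = u ∧ j = v) := fun h => hRv (h.2 ▸ hj)
      have h2 : ¬ (i = v ∧ j = u) := fun h => hRv (h.1 ▸ hi)
      simp only [hydef, if_pos hi, if_pos hj, if_neg h1, if_neg h2]
      ring
    · by_cases hz : Γ.sign i j = 0
      · simp [hydef, hz]
      · obtain ⟨hiu, hjv⟩ := crossing i j hi hj hz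
        have h1 : i = u ∧ j = v := ⟨hiu, hjv⟩
        have h2 : ¬ (i = v ∧ j = u) := fun h => huv (hiu.symm.trans h.1)
        simp only [hydef, if_pos hi, if_neg hj, if_pos h1, if_neg h2]
        ring
    · by_cases hz : Γ.sign i j = 0
      · simp [hydef, hz]
      · have hz' : Γ.sign j i ≠ 0 := by rwa [← Γ.symm i j]
        obtain ⟨hju, hiv⟩ := crossing j i hj hi hz'
        have h1 : ¬ (i = u ∧ j = v) := fun h => huv (h.1.symm.trans hiv)
        have h2 : i = v ∧ j = u := ⟨hiv, hju⟩
        simp only [hydef, if_neg hi, if_pos hj, if_neg h1, if_pos h2]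
        ring
    · have h1 : ¬ (i = u ∧ j = v) := fun h => hi (h.1 ▸ hRu)
      have h2 : ¬ (i = v ∧ j = u) := fun h => hj (h.2 ▸ hRu)
      simp only [hydef, if_neg hi, if_neg hj, if_neg h1, if_neg h2]
      ring
  have hx : x ⬝ᵥ Γ.adj *ᵥ x = lam := by
    rw [show Γ.adj *ᵥ x = lam • x from heig]
    simp [dotProduct, smul_eq_mul, Finset.mul_sum, ← sq]
    calc ∑ i, x i * (lam * x i) = lam * ∑ i, x i ^ 2 := by
          rw [Finset.mul_sum]; exact Finset.sum_congr rfl fun i _ => by ring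
      _ = lam := by rw [hunit, mul_one]
  have sumif1 : ∑ i, ∑ j, (if i = u ∧ j = v then 2 * (Γ.sign i j * x i * x j) else 0)
      = 2 * (Γ.sign u v * x u * x v) := by
    simp [ite_and, Finset.sum_ite_eq, Finset.sum_ite_eq']
  have sumif2 : ∑ i, ∑ j, (if i = v ∧ j = u then 2 * (Γ.sign i j * x i * x j) else 0)
      = 2 * (Γ.sign u v * x u * x v) := by
    calc ∑ i, ∑ j, (if i = v ∧ j = u then 2 * (Γ.sign i j * x i * x j) else 0)
        = 2 * (Γ.sign v u * x v * x u) := by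
          simp [ite_and, Finset.sum_ite_eq, Finset.sum_ite_eq']
      _ = 2 * (Γ.sign u v * x u * x v) := by rw [Γ.symm v u]; ring
  have hyAy : y ⬝ᵥ Γ.adj *ᵥ y = lam - 4 * (Γ.sign u v * x u * x v) := by
    rw [expand y]
    calc ∑ i, ∑ j, y i * (Γ.sign i j * y j)
        = ∑ i, ∑ j, (x i * (Γ.sign i j * x j)
            - ((if i = u ∧ j = v then 2 * (Γ.sign i j * x i * x j) else 0)
                + (if i = v ∧ j = u then 2 * (Γ.sign i j * x i * x j) else 0))) :=
          Finset.sum_congr rfl fun i _ => Finset.sum_congr rfl fun j _ => key i j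
      _ = (∑ i, ∑ j, x i * (Γ.sign i j * x j))
            - ((∑ i, ∑ j, (if i = u ∧ j = v then 2 * (Γ.sign i j * x i * x j) else 0))
                + (∑ i, ∑ j, (if i = v ∧ j = u then 2 * (Γ.sign i j * x i * x j) else 0))) := by
          simp [Finset.sum_sub_distrib, Finset.sum_add_distrib]
      _ = lam - 4 * (Γ.sign u v * x u * x v) := by
          rw [← expand x, hx, sumif1, sumif2]; ring
  have hyy : y ⬝ᵥ y = 1 := by
    have : ∀ i, y i * y i = x i ^ 2 := by
      intro i
      by_cases h : R i <;> simp [hydef, h] <;> ring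
    calc y ⬝ᵥ y = ∑ i, y i * y i := rfl
      _ = ∑ i, x i ^ 2 := Finset.sum_congr rfl fun i _ => this i
      _ = 1 := hunit
  have hray := rayleigh_bound Γ.adj hA lam hlam.2 y
  rw [hyAy, hyy, mul_one] at hray
  linarith
end

section
/- Let Γ be a connected signed graph, u and v two vertices, and vv_1, …, vv_s (s ≥ 1) cut edges of Γ with u not among v_1,…,v_s. Let x be a unit eigenvector for the index λ(Γ). Let Γ' be obtained from Γ by deleting the edges vv_1,…,vv_s and adding edges uv_1,…,uv_s with the same signs. If x_u ≥ x_v ≥ 0 or x_u ≤ x_v ≤ 0, then λ(Γ') ≥ λ(Γ). -/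
open Matrix in
lemma my_rayleigh_le {n : ℕ} (hn : n ≠ 0) (A : Matrix (Fin n) (Fin n) ℝ)
    (hsymm : A.IsHermitian) (lam : ℝ)
    (hb : ∀ μ : ℝ, (∃ y : Fin n → ℝ, y ≠ 0 ∧ A.mulVec y = μ • y) → μ ≤ lam)
    (y : Fin n → ℝ) : y ⬝ᵥ A.mulVec y ≤ lam * (y ⬝ᵥ y) := by
  have : Nonempty (Fin n) := ⟨⟨0, Nat.pos_of_ne_zero hn⟩⟩
  have : Nontrivial (EuclideanSpace ℝ (Fin n)) := by
    refine ⟨0, (WithLp.equiv 2 _).symm (fun _ => 1), ?_⟩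
    intro h
    have := congrFun congr(WithLp.equiv 2 _ $h) (Classical.arbitrary (Fin n))
    simp at this
  set T := Matrix.toEuclideanLin A with hT
  have hsT : T.IsSymmetric := Matrix.isHermitian_iff_isSymmetric.1 hsymm
  set μ₀ : ℝ := (⨆ x : { x : EuclideanSpace ℝ (Fin n) // x ≠ 0 },
      RCLike.re (inner ℝ (T x) (x : EuclideanSpace ℝ (Fin n)) : ℝ) / ‖(x : EuclideanSpace ℝ (Fin n))‖ ^ 2) with hμ₀
  have hev : Module.End.HasEigenvalue T μ₀ := by
    simpa [hμ₀] using hsT.hasEigenvalue_iSup_of_finiteDimensional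
  obtain ⟨w, hw⟩ := hev.exists_hasEigenvector
  have hμlam : μ₀ ≤ lam := by
    refine hb μ₀ ⟨WithLp.equiv 2 _ w, ?_, ?_⟩
    · intro h0
      exact hw.2 ((WithLp.equiv 2 _).injective (by simpa using h0))
    · have := hw.apply_eq_smul
      have h2 := congrArg (WithLp.equiv 2 _) this
      simpa [hT, Matrix.ofLp_toEuclideanLin_apply] using h2
  rcases eq_or_ne y 0 with rfl | hy
  · simp
  · set ye : EuclideanSpace ℝ (Fin n) := (WithLp.equiv 2 _).symm y with hye
    have hyne : ye ≠ 0 := by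
      intro h; apply hy
      simpa [hye] using congrArg (WithLp.equiv 2 _) h
    have hbdd : BddAbove (Set.range fun x : { x : EuclideanSpace ℝ (Fin n) // x ≠ 0 } =>
        RCLike.re (inner ℝ (T x) (x : EuclideanSpace ℝ (Fin n)) : ℝ) / ‖(x : EuclideanSpace ℝ (Fin n))‖ ^ 2) := by
      refine ⟨‖LinearMap.toContinuousLinearMap T‖, ?_⟩
      rintro r ⟨⟨z, hz⟩, rfl⟩
      have hzn : ‖z‖ ≠ 0 := norm_ne_zero_iff.2 hz
      have hz0 : (0:ℝ) < ‖z‖ ^ 2 := by positivity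
      rw [div_le_iff₀ hz0]
      calc RCLike.re (inner ℝ (T z) z : ℝ) ≤ ‖T z‖ * ‖z‖ := by
            simpa using real_inner_le_norm (T z) z
        _ ≤ ‖LinearMap.toContinuousLinearMap T‖ * ‖z‖ * ‖z‖ := by
            have h1 := (LinearMap.toContinuousLinearMap T).le_opNorm z
            have h2 : LinearMap.toContinuousLinearMap T z = T z := rfl
            rw [h2] at h1
            have h0 : (0:ℝ) ≤ ‖z‖ := norm_nonneg z
            nlinarith [h1]
        _ = ‖LinearMap.toContinuousLinearMap T‖ * ‖z‖ ^ 2 := by ring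
    have hle : RCLike.re (inner ℝ (T ye) (ye : EuclideanSpace ℝ (Fin n)) : ℝ) / ‖ye‖ ^ 2 ≤ μ₀ :=
      le_ciSup hbdd ⟨ye, hyne⟩
    have hinner : RCLike.re (inner ℝ (T ye) (ye : EuclideanSpace ℝ (Fin n)) : ℝ) = y ⬝ᵥ A.mulVec y := by
      have h3 : T ye = (WithLp.equiv 2 (Fin n → ℝ)).symm (A.mulVec y) :=
        Matrix.toEuclideanLin_apply_piLp_toLp A y
      rw [h3]
      simp only [hye, PiLp.inner_apply, RCLike.inner_apply, WithLp.equiv_symm_apply, PiLp.toLp_apply,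
        starRingEnd_apply, star_trivial, RCLike.re_to_real, map_sum]
      simp [dotProduct, mul_comm]
    have hnorm : ‖ye‖ ^ 2 = y ⬝ᵥ y := by
      rw [EuclideanSpace.norm_eq, Real.sq_sqrt (by positivity)]
      simp [hye, dotProduct, sq]
    have hpos : (0:ℝ) < ‖ye‖ ^ 2 := by
      have : ‖ye‖ ≠ 0 := norm_ne_zero_iff.2 hyne
      positivity
    rw [div_le_iff₀ hpos] at hle
    calc y ⬝ᵥ A.mulVec y = RCLike.re (inner ℝ (T ye) (ye : EuclideanSpace ℝ (Fin n)) : ℝ) := hinner.symm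
      _ ≤ μ₀ * ‖ye‖ ^ 2 := hle
      _ ≤ lam * ‖ye‖ ^ 2 := by nlinarith
      _ = lam * (y ⬝ᵥ y) := by rw [hnorm]

lemma sg_herm {n : ℕ} (Γ : SignedGraph n) : Γ.adj.IsHermitian := by
  ext i j
  simp [SignedGraph.adj, Matrix.conjTranspose_apply, Γ.symm i j]

open Matrix in
lemma sg_quad {n : ℕ} (Γ : SignedGraph n) (y : Fin n → ℝ) :
    y ⬝ᵥ Γ.adj.mulVec y = ∑ p, ∑ q, Γ.sign p q * y p * y q := by
  simp only [dotProduct, Matrix.mulVec, SignedGraph.adj, Matrix.of_apply, Finset.mul_sum]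
  apply Finset.sum_congr rfl; intro p _
  apply Finset.sum_congr rfl; intro q _
  ring

/-- Moving cut edges `vv_1, …, vv_s` from `v` to `u` (keeping their signs) does not
decrease the index, provided `x_u ≥ x_v ≥ 0` or `x_u ≤ x_v ≤ 0` for a unit eigenvector
`x` of the index of `Γ`. -/
theorem stmt_2 {n : ℕ} (Γ Γ' : SignedGraph n) (u v : Fin n) (huv : u ≠ v)
    (hconn : Γ.graph.Connected)
    (S : Finset (Fin n)) (hS : S.Nonempty) (huS : u ∉ S) (hvS : v ∉ S)
    (hedges : ∀ i ∈ S, Γ.graph.Adj v i)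
    (hcut : ∀ i ∈ S, ¬ (Γ.graph.deleteEdges {s(v, i)}).Reachable v i)
    (hnoedge : ∀ i ∈ S, Γ.sign u i = 0)
    (hmove1 : ∀ i ∈ S, Γ'.sign u i = Γ.sign v i)
    (hmove2 : ∀ i ∈ S, Γ'.sign v i = 0)
    (hsame : ∀ i j, ¬ ((i = u ∨ i = v) ∧ j ∈ S) → ¬ ((j = u ∨ j = v) ∧ i ∈ S) →
      Γ'.sign i j = Γ.sign i j)
    (lam : ℝ) (hlam : Γ.IsIndex lam)
    (x : Fin n → ℝ) (hunit : ∑ i, x i ^ 2 = 1) (heig : Γ.adj.mulVec x = lam • x)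
    (hcond : (0 ≤ x v ∧ x v ≤ x u) ∨ (x u ≤ x v ∧ x v ≤ 0)) :
    ∀ lam' : ℝ, Γ'.IsIndex lam' → lam ≤ lam' := by
  classical
  intro lam' hlam'
  obtain ⟨i₀, hi₀⟩ := hS
  have hn : n ≠ 0 := by rintro rfl; exact i₀.elim0
  have hxx : dotProduct x x = 1 := by
    simpa [dotProduct, sq] using hunit
  have hlamQ : ∑ p, ∑ q, Γ.sign p q * x p * x q = lam := by
    rw [← sg_quad, heig, dotProduct_smul, hxx, smul_eq_mul, mul_one]
  have hrowx : ∀ p, ∑ q, Γ.sign p q * x q = lam * x p := by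
    intro p
    have := congrFun heig p
    simpa [Matrix.mulVec, dotProduct, SignedGraph.adj] using this
  -- key cut-edge facts
  have key : ∀ i ∈ S, 0 ≤ Γ.sign v i * x i * x v ∧ (x v = 0 → Γ.sign v i * x i = 0) := by
    intro i hi
    have hvi : v ≠ i := fun h => hvS (h ▸ hi)
    set P : Fin n → Prop := fun w => (Γ.graph.deleteEdges {s(v,i)}).Reachable i w with hP
    have hPi : P i := SimpleGraph.Reachable.refl i
    have hPv : ¬ P v := fun h => hcut i hi h.symm
    have hcross : ∀ p q, Γ.sign p q ≠ 0 → s(p,q) ≠ s(v,i) → (P p ↔ P q) := by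
      intro p q h1 h2
      have hadj : (Γ.graph.deleteEdges {s(v,i)}).Adj p q := by
        rw [SimpleGraph.deleteEdges_adj]
        exact ⟨h1, by simpa using h2⟩
      exact ⟨fun hp => hp.trans hadj.reachable, fun hq => hq.trans hadj.symm.reachable⟩
    set z : Fin n → ℝ := fun w => if P w then -x w else x w with hz
    have hzv : z v = x v := by simp [hz, hPv]
    have hzi : z i = -x i := by simp [hz, hPi]
    have hzz : dotProduct z z = 1 := by
      rw [dotProduct, ← hxx, dotProduct]
      apply Finset.sum_congr rfl
      intro w _
      by_cases hw : P w <;> simp [hz, hw] <;> ring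
    have hQz : ∑ p, ∑ q, Γ.sign p q * z p * z q = lam - 4 * (Γ.sign v i * x v * x i) := by
      have hterm : ∀ p q, Γ.sign p q * z p * z q - Γ.sign p q * x p * x q =
          (if p = v ∧ q = i then (-2) * (Γ.sign v i * x v * x i) else 0)
          + (if p = i ∧ q = v then (-2) * (Γ.sign v i * x v * x i) else 0) := by
        intro p q
        by_cases hpq : s(p,q) = s(v,i)
        · rcases Sym2.eq_iff.1 hpq with ⟨rfl, rfl⟩ | ⟨rfl, rfl⟩
          · simp [hvi, hvi.symm, hzv, hzi]
            ring
          · simp [hvi, hvi.symm, hzv, hzi, Γ.symm q p]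
            ring
        · have h1 : ¬ (p = v ∧ q = i) := by
            rintro ⟨rfl, rfl⟩; exact hpq rfl
          have h2 : ¬ (p = i ∧ q = v) := by
            rintro ⟨rfl, rfl⟩; exact hpq (Sym2.eq_swap)
          rw [if_neg h1, if_neg h2]
          by_cases hs : Γ.sign p q = 0
          · simp [hs]
          · have := hcross p q hs hpq
            by_cases hp : P p
            · have hq : P q := this.1 hp
              simp [hz, hp, hq]
            · have hq : ¬ P q := fun h => hp (this.2 h)
              simp [hz, hp, hq]
      have hsub : ∑ p, ∑ q, (Γ.sign p q * z p * z q - Γ.sign p q * x p * x q)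
          = -4 * (Γ.sign v i * x v * x i) := by
        calc ∑ p, ∑ q, (Γ.sign p q * z p * z q - Γ.sign p q * x p * x q)
            = ∑ p, ∑ q, ((if p = v ∧ q = i then (-2) * (Γ.sign v i * x v * x i) else 0)
              + (if p = i ∧ q = v then (-2) * (Γ.sign v i * x v * x i) else 0)) := by
              exact Finset.sum_congr rfl fun p _ => Finset.sum_congr rfl fun q _ => hterm p q
          _ = -4 * (Γ.sign v i * x v * x i) := by
              simp only [Finset.sum_add_distrib, ite_and]
              simp [Finset.sum_ite_eq, Finset.sum_ite_eq']
              ring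
      rw [show (∑ p, ∑ q, (Γ.sign p q * z p * z q - Γ.sign p q * x p * x q))
        = (∑ p, ∑ q, Γ.sign p q * z p * z q) - ∑ p, ∑ q, Γ.sign p q * x p * x q by
          rw [← Finset.sum_sub_distrib]
          exact Finset.sum_congr rfl fun p _ => Finset.sum_sub_distrib _ _] at hsub
      rw [hlamQ] at hsub
      linarith
    have hrowz : ∑ q, Γ.sign v q * z q = lam * x v - 2 * (Γ.sign v i * x i) := by
      have hterm : ∀ q, Γ.sign v q * z q - Γ.sign v q * x q
          = if q = i then (-2) * (Γ.sign v i * x i) else 0 := by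
        intro q
        by_cases hq : q = i
        · subst hq; rw [if_pos rfl, hzi]; ring
        · rw [if_neg hq]
          by_cases hs : Γ.sign v q = 0
          · simp [hs]
          · have hpq : s(v,q) ≠ s(v,i) := by
              intro h
              rcases Sym2.eq_iff.1 h with ⟨-, rfl⟩ | ⟨h1, h2⟩
              · exact hq rfl
              · exact hvi h1
            have := hcross v q hs hpq
            have hqP : ¬ P q := fun h => hPv (this.2 h)
            simp [hz, hqP]
      have : ∑ q, (Γ.sign v q * z q - Γ.sign v q * x q) = (-2) * (Γ.sign v i * x i) := by
        rw [Finset.sum_congr rfl fun q _ => hterm q]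
        simp
      rw [Finset.sum_sub_distrib, hrowx v] at this
      linarith
    -- perturbation inequality
    have hper : ∀ t : ℝ, (lam - 4 * (Γ.sign v i * x v * x i))
        + 2 * t * (lam * x v - 2 * (Γ.sign v i * x i)) ≤ lam * (1 + 2 * t * x v + t ^ 2) := by
      intro t
      set y : Fin n → ℝ := z + t • (Pi.single v 1 : Fin n → ℝ) with hy
      have hray := my_rayleigh_le hn Γ.adj (sg_herm Γ) lam hlam.2 y
      have hQy : dotProduct y (Γ.adj.mulVec y) = (lam - 4 * (Γ.sign v i * x v * x i))
          + 2 * t * (lam * x v - 2 * (Γ.sign v i * x i)) := by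
        rw [hy]
        rw [add_dotProduct, Matrix.mulVec_add, dotProduct_add,
          dotProduct_add, Matrix.mulVec_smul, dotProduct_smul,
          smul_dotProduct, smul_dotProduct, dotProduct_smul]
        have e1 : dotProduct z (Γ.adj.mulVec z) = lam - 4 * (Γ.sign v i * x v * x i) := by
          rw [sg_quad]; exact hQz
        have e2 : dotProduct (Pi.single v 1 : Fin n → ℝ) (Γ.adj.mulVec z) = lam * x v - 2 * (Γ.sign v i * x i) := by
          rw [single_dotProduct, one_mul]
          rw [show (Γ.adj.mulVec z) v = ∑ q, Γ.sign v q * z q by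
            simp [Matrix.mulVec, dotProduct, SignedGraph.adj]]
          exact hrowz
        have e3 : dotProduct z (Γ.adj.mulVec (Pi.single v 1)) = lam * x v - 2 * (Γ.sign v i * x i) := by
          rw [show Γ.adj.mulVec (Pi.single v 1) = fun p => Γ.adj p v * 1 from
            funext fun _ => dotProduct_single _ _ _]
          rw [show dotProduct z (fun p => Γ.adj p v * 1) = ∑ p, Γ.sign v p * z p by
            rw [dotProduct]
            exact Finset.sum_congr rfl fun p _ => by
              simp [SignedGraph.adj, Γ.symm p v]; ring]
          exact hrowz
        have e4 : dotProduct (Pi.single v 1 : Fin n → ℝ) (Γ.adj.mulVec (Pi.single v 1)) = 0 := by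
          rw [Matrix.mulVec_single, single_dotProduct]
          simp [SignedGraph.adj, Γ.loopless v]
        rw [e1, e2, e3, e4]
        simp only [smul_eq_mul]
        ring
      have hyy : dotProduct y y = 1 + 2 * t * x v + t ^ 2 := by
        rw [hy, add_dotProduct, dotProduct_add, dotProduct_add,
          smul_dotProduct, smul_dotProduct, dotProduct_smul,
          dotProduct_smul, hzz]
        rw [single_dotProduct, dotProduct_single, single_dotProduct, hzv]
        simp only [Pi.single_eq_same, smul_eq_mul, one_mul, mul_one]
        ring
      rw [hQy, hyy] at hray
      exact hray
    constructor
    · have := hper 0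
      simp at this
      nlinarith [this]
    · intro hxv
      by_contra hc
      set c : ℝ := Γ.sign v i * x i with hcdef
      have hper' : ∀ t : ℝ, -(4 * t * c) ≤ lam * t ^ 2 := by
        intro t
        have := hper t
        rw [hxv] at this
        nlinarith [this]
      have hc2 : (0:ℝ) < c ^ 2 := by positivity
      have hlpos : 0 < lam := by
        have l1 := hper' 1
        have l2 := hper' (-1)
        rcases lt_or_gt_of_ne hc with h | h
        · nlinarith [l2]
        · nlinarith [l1]
      have h3 := hper' (-(c / lam))
      have h4 := mul_le_mul_of_nonneg_left h3 hlpos.le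
      have e : lam * (-(4 * (-(c / lam)) * c)) = 4 * c ^ 2 := by
        field_simp
      have e2 : lam * (lam * (-(c / lam)) ^ 2) = c ^ 2 := by
        field_simp
      rw [e, e2] at h4
      linarith [h4, hc2]
  -- nonnegativity of the per-edge gain
  have Dfact : ∀ i ∈ S, 0 ≤ (Γ.sign v i * x i) * (x u - x v) := by
    intro i hi
    obtain ⟨k1, k2⟩ := key i hi
    rcases lt_trichotomy (x v) 0 with hv | hv | hv
    · rcases hcond with ⟨h1, h2⟩ | ⟨h1, h2⟩
      · linarith
      · nlinarith [k1]
    · rw [k2 hv]; ring_nf; simp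
    · rcases hcond with ⟨h1, h2⟩ | ⟨h1, h2⟩
      · nlinarith [k1]
      · linarith
  -- the quadratic form of Γ' at x
  have hQ' : ∑ p, ∑ q, Γ'.sign p q * x p * x q
      = lam + ∑ i ∈ S, 2 * ((Γ.sign v i * x i) * (x u - x v)) := by
    have hterm : ∀ p q, Γ'.sign p q * x p * x q - Γ.sign p q * x p * x q =
        ((if p = u ∧ q ∈ S then Γ.sign v q * x u * x q else 0)
        + (if p = v ∧ q ∈ S then -(Γ.sign v q * x v * x q) else 0))
        + ((if q = u ∧ p ∈ S then Γ.sign v p * x u * x p else 0)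
        + (if q = v ∧ p ∈ S then -(Γ.sign v p * x v * x p) else 0)) := by
      intro p q
      by_cases h1 : p = u ∧ q ∈ S
      · obtain ⟨hpu, hq⟩ := h1
        have hqu : q ≠ u := fun h => huS (h ▸ hq)
        have hqv : q ≠ v := fun h => hvS (h ▸ hq)
        have hpv : p ≠ v := by rw [hpu]; exact huv
        have hpS : p ∉ S := by rw [hpu]; exact huS
        rw [if_pos ⟨hpu, hq⟩, if_neg (fun h => hpv h.1), if_neg (fun h => hpS h.2),
          if_neg (fun h => hpS h.2)]
        rw [hpu, hmove1 q hq, hnoedge q hq]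
        ring
      · by_cases h2 : p = v ∧ q ∈ S
        · obtain ⟨hpv, hq⟩ := h2
          have hpS : p ∉ S := by rw [hpv]; exact hvS
          rw [if_neg h1, if_pos ⟨hpv, hq⟩, if_neg (fun h => hpS h.2), if_neg (fun h => hpS h.2)]
          rw [hpv, hmove2 q hq]
          ring
        · by_cases h3 : q = u ∧ p ∈ S
          · obtain ⟨hqu, hp⟩ := h3
            have hqS : q ∉ S := by rw [hqu]; exact huS
            rw [if_neg h1, if_neg h2, if_pos ⟨hqu, hp⟩, if_neg (fun h => huv (hqu.symm.trans h.1))]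
            rw [hqu, Γ'.symm p u, Γ.symm p u, hmove1 p hp, hnoedge p hp]
            ring
          · by_cases h4 : q = v ∧ p ∈ S
            · obtain ⟨hqv, hp⟩ := h4
              rw [if_neg h1, if_neg h2, if_neg h3, if_pos ⟨hqv, hp⟩]
              rw [hqv, Γ'.symm p v, Γ.symm p v, hmove2 p hp]
              ring
            · rw [if_neg h1, if_neg h2, if_neg h3, if_neg h4]
              rw [hsame p q ?_ ?_]
              · ring
              · rintro ⟨hj | hj, hqS⟩
                · exact h1 ⟨hj, hqS⟩
                · exact h2 ⟨hj, hqS⟩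
              · rintro ⟨hj | hj, hpS⟩
                · exact h3 ⟨hj, hpS⟩
                · exact h4 ⟨hj, hpS⟩
    have A1 : ∑ p, ∑ q, (if p = u ∧ q ∈ S then Γ.sign v q * x u * x q else 0)
        = ∑ q ∈ S, Γ.sign v q * x u * x q := by
      have hrow : ∀ p, (∑ q, if p = u ∧ q ∈ S then Γ.sign v q * x u * x q else 0)
          = if p = u then ∑ q ∈ S, Γ.sign v q * x u * x q else 0 := by
        intro p
        by_cases hp : p = u
        · subst hp
          simp [Finset.sum_ite_mem]
        · simp [hp]
      rw [Finset.sum_congr rfl fun p _ => hrow p]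
      simp
    have A2 : ∑ p, ∑ q, (if p = v ∧ q ∈ S then -(Γ.sign v q * x v * x q) else 0)
        = ∑ q ∈ S, -(Γ.sign v q * x v * x q) := by
      have hrow : ∀ p, (∑ q, if p = v ∧ q ∈ S then -(Γ.sign v q * x v * x q) else 0)
          = if p = v then ∑ q ∈ S, -(Γ.sign v q * x v * x q) else 0 := by
        intro p
        by_cases hp : p = v
        · subst hp
          simp [Finset.sum_ite_mem]
        · simp [hp]
      rw [Finset.sum_congr rfl fun p _ => hrow p]
      simp
    have A3 : ∑ p, ∑ q, (if q = u ∧ p ∈ S then Γ.sign v p * x u * x p else 0)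
        = ∑ p ∈ S, Γ.sign v p * x u * x p := by
      have hrow : ∀ p, (∑ q, if q = u ∧ p ∈ S then Γ.sign v p * x u * x p else 0)
          = if p ∈ S then Γ.sign v p * x u * x p else 0 := by
        intro p
        by_cases hp : p ∈ S
        · simp [hp, Finset.sum_ite_eq']
        · simp [hp]
      rw [Finset.sum_congr rfl fun p _ => hrow p]
      rw [Finset.sum_ite_mem, Finset.univ_inter]
    have A4 : ∑ p, ∑ q, (if q = v ∧ p ∈ S then -(Γ.sign v p * x v * x p) else 0)
        = ∑ p ∈ S, -(Γ.sign v p * x v * x p) := by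
      have hrow : ∀ p, (∑ q, if q = v ∧ p ∈ S then -(Γ.sign v p * x v * x p) else 0)
          = if p ∈ S then -(Γ.sign v p * x v * x p) else 0 := by
        intro p
        by_cases hp : p ∈ S
        · simp [hp, Finset.sum_ite_eq']
        · simp [hp]
      rw [Finset.sum_congr rfl fun p _ => hrow p]
      rw [Finset.sum_ite_mem, Finset.univ_inter]
    have hdiff : (∑ p, ∑ q, Γ'.sign p q * x p * x q) - ∑ p, ∑ q, Γ.sign p q * x p * x q
        = ∑ i ∈ S, 2 * ((Γ.sign v i * x i) * (x u - x v)) := by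
      rw [← Finset.sum_sub_distrib]
      rw [Finset.sum_congr rfl fun p _ => (Finset.sum_sub_distrib (s := Finset.univ)
        (f := fun q => Γ'.sign p q * x p * x q) (g := fun q => Γ.sign p q * x p * x q)).symm]
      rw [Finset.sum_congr rfl fun p _ => Finset.sum_congr rfl fun q _ => hterm p q]
      simp only [Finset.sum_add_distrib]
      rw [A1, A2, A3, A4]
      have hfin : ∀ q ∈ S, 2 * ((Γ.sign v q * x q) * (x u - x v))
          = (Γ.sign v q * x u * x q + -(Γ.sign v q * x v * x q))
            + (Γ.sign v q * x u * x q + -(Γ.sign v q * x v * x q)) := fun q _ => by ring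
      rw [Finset.sum_congr rfl hfin]
      simp only [Finset.sum_add_distrib]
    rw [hlamQ] at hdiff
    linarith [hdiff]
  -- conclude
  have hray := my_rayleigh_le hn Γ'.adj (sg_herm Γ') lam' hlam'.2 x
  rw [hxx, mul_one, sg_quad, hQ'] at hray
  have hsum : 0 ≤ ∑ i ∈ S, 2 * ((Γ.sign v i * x i) * (x u - x v)) :=
    Finset.sum_nonneg fun i hi => by nlinarith [Dfact i hi]
  linarith
end

section
/- Let Γ_1 be the signed graph on n ≥ 7 vertices obtained from two triangles sharing a common vertex u (where one triangle is unbalanced with exactly one negative edge and the other is all-positive) by attaching n − 5 pendant vertices at u. Then the characteristic polynomial of Γ_1 is Φ(Γ_1, x) = x^{n−6}(x² − 1)(x⁴ − n x² + n − 5), and its index λ(Γ_1) is the largest root of x⁴ − n x² + n − 5 = 0. -/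
open Polynomial

/-- The sign function of `Γ₁`: two triangles sharing the common vertex `0`
(the triangle `0,1,2` all-positive, the triangle `0,3,4` with the single negative
edge `34`), together with `n − 5` positive pendant edges at `0`. -/
def gamma1Sign (n : ℕ) : Fin n → Fin n → ℝ := fun i j =>
  if ((i : ℕ) = 1 ∧ (j : ℕ) = 2) ∨ ((i : ℕ) = 2 ∧ (j : ℕ) = 1) then 1
  else if ((i : ℕ) = 3 ∧ (j : ℕ) = 4) ∨ ((i : ℕ) = 4 ∧ (j : ℕ) = 3) then -1
  else if ((i : ℕ) = 0 ∧ (j : ℕ) ≠ 0) ∨ ((j : ℕ) = 0 ∧ (i : ℕ) ≠ 0) then 1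
  else 0

open Matrix

section Aux

/-- `gamma1Sign` as a function of the underlying natural numbers. -/
def natSign : ℕ → ℕ → ℝ := fun i j =>
  if (i = 1 ∧ j = 2) ∨ (i = 2 ∧ j = 1) then 1
  else if (i = 3 ∧ j = 4) ∨ (i = 4 ∧ j = 3) then -1
  else if (i = 0 ∧ j ≠ 0) ∨ (j = 0 ∧ i ≠ 0) then 1
  else 0

lemma gamma_eq_natSign (n : ℕ) (i j : Fin n) : gamma1Sign n i j = natSign i j := rfl

lemma natSign_big_right {a b : ℕ} (hb : 5 ≤ b) :
    natSign a b = if a = 0 then 1 else 0 := by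
  unfold natSign
  rcases eq_or_ne a 0 with h | h
  · subst h; rw [if_neg (by omega), if_neg (by omega), if_pos (by omega), if_pos rfl]
  · rw [if_neg (by omega), if_neg (by omega), if_neg (by omega), if_neg h]

lemma natSign_big_left {a b : ℕ} (ha : 5 ≤ a) :
    natSign a b = if b = 0 then 1 else 0 := by
  unfold natSign
  rcases eq_or_ne b 0 with h | h
  · subst h; rw [if_neg (by omega), if_neg (by omega), if_pos (by omega), if_pos rfl]
  · rw [if_neg (by omega), if_neg (by omega), if_neg (by omega), if_neg h]

/-- The top-left 5×5 block of the adjacency matrix. -/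
noncomputable def A5 : Matrix (Fin 5) (Fin 5) ℝ := Matrix.of fun i j => natSign i j

/-- The indicator of the vertex `0` among the first five. -/
noncomputable def Bv : Fin 5 → ℝ := fun i => if (i : ℕ) = 0 then 1 else 0

lemma eval_charpoly' {m : ℕ} (M : Matrix (Fin m) (Fin m) ℝ) (x : ℝ) :
    (M.charpoly).eval x = (x • (1 : Matrix (Fin m) (Fin m) ℝ) - M).det := by
  rw [Matrix.charpoly, ← Polynomial.coe_evalRingHom, RingHom.map_det]
  congr 1
  ext i j
  by_cases h : i = j <;>
    simp [h, Matrix.charmatrix_apply, Matrix.one_apply, Matrix.diagonal_apply]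

lemma det5 (a x : ℝ) :
    (!![a,-1,-1,-1,-1; -1,x,-1,0,0; -1,-1,x,0,0; -1,0,0,x,1; -1,0,0,1,x]).det
      = a*(x^2-1)^2 - 4*x*(x^2-1) := by
  simp [Matrix.det_succ_row_zero, Fin.sum_univ_succ, Fin.succAbove]
  ring

lemma block_decomp (m n : ℕ) (h5 : 5 + m = n) (x : ℝ) :
    (x • (1 : Matrix (Fin n) (Fin n) ℝ) - Matrix.of (gamma1Sign n)).submatrix
        (finSumFinEquiv.trans (finCongr h5)) (finSumFinEquiv.trans (finCongr h5)) =
      fromBlocks (x • 1 - A5) (Matrix.of fun i (_ : Fin m) => -Bv i)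
        (Matrix.of fun (_ : Fin m) j => -Bv j) (x • 1) := by
  set e : Fin 5 ⊕ Fin m ≃ Fin n := finSumFinEquiv.trans (finCongr h5) with he
  have hvl : ∀ i : Fin 5, ((e (Sum.inl i)) : ℕ) = (i : ℕ) := by
    intro i; simp [he, finSumFinEquiv]
  have hvr : ∀ k : Fin m, ((e (Sum.inr k)) : ℕ) = 5 + (k : ℕ) := by
    intro k; simp [he, finSumFinEquiv]
  have key : ∀ u v : Fin n,
      (x • (1 : Matrix (Fin n) (Fin n) ℝ) - Matrix.of (gamma1Sign n)) u v
        = x * (if (u : ℕ) = (v : ℕ) then 1 else 0) - natSign u v := by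
    intro u v
    simp [Matrix.one_apply, Fin.ext_iff, gamma1Sign, natSign]
  ext a b
  cases a with
  | inl i =>
    cases b with
    | inl j =>
      simp only [submatrix_apply, fromBlocks_apply₁₁, key, hvl, A5, Matrix.sub_apply,
        Matrix.smul_apply, Matrix.one_apply, of_apply, smul_eq_mul, Fin.ext_iff]
    | inr k =>
      simp only [submatrix_apply, fromBlocks_apply₁₂, key, hvl, hvr, of_apply]
      rw [natSign_big_right (by omega), if_neg (by omega), Bv]
      ring
  | inr k =>
    cases b with
    | inl j =>
      simp only [submatrix_apply, fromBlocks_apply₂₁, key, hvl, hvr, of_apply]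
      rw [natSign_big_left (by omega), if_neg (by omega), Bv]
      ring
    | inr k' =>
      simp only [submatrix_apply, fromBlocks_apply₂₂, key, hvr, Matrix.smul_apply,
        Matrix.one_apply, smul_eq_mul, Fin.ext_iff]
      rw [natSign_big_right (by omega), if_neg (show ¬(5 + (k:ℕ) = 0) by omega)]
      by_cases hkk : (k:ℕ) = (k':ℕ)
      · rw [if_pos (by omega), if_pos hkk]; ring
      · rw [if_neg (by omega), if_neg hkk]; ring

lemma det_formula (n : ℕ) (hn : 7 ≤ n) (x : ℝ) (hx : x ≠ 0) :
    (x • (1 : Matrix (Fin n) (Fin n) ℝ) - Matrix.of (gamma1Sign n)).det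
      = x ^ (n-6) * (x^2-1) * (x^4 - n*x^2 + ((n:ℝ) - 5)) := by
  obtain ⟨m, h5⟩ : ∃ m, 5 + m = n := ⟨n - 5, by omega⟩
  rw [← Matrix.det_submatrix_equiv_self (finSumFinEquiv.trans (finCongr h5)),
    block_decomp m n h5 x]
  have h1 : (x⁻¹ • (1 : Matrix (Fin m) (Fin m) ℝ)) * (x • 1) = 1 := by
    rw [Matrix.smul_mul, Matrix.mul_smul, Matrix.mul_one, smul_smul,
      inv_mul_cancel₀ hx, one_smul]
  have h2 : (x • (1 : Matrix (Fin m) (Fin m) ℝ)) * (x⁻¹ • 1) = 1 := by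
    rw [Matrix.smul_mul, Matrix.mul_smul, Matrix.mul_one, smul_smul,
      mul_inv_cancel₀ hx, one_smul]
  letI : Invertible (x • (1 : Matrix (Fin m) (Fin m) ℝ)) := ⟨x⁻¹ • 1, h1, h2⟩
  rw [Matrix.det_fromBlocks₂₂]
  have hinv : ⅟(x • (1 : Matrix (Fin m) (Fin m) ℝ)) = x⁻¹ • 1 := invOf_eq_right_inv h2
  rw [hinv]
  have hBC : (Matrix.of fun i (_ : Fin m) => -Bv i) * (x⁻¹ • (1 : Matrix (Fin m) (Fin m) ℝ)) *
      (Matrix.of fun (_ : Fin m) j => -Bv j)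
      = Matrix.of fun i j => (m : ℝ) * x⁻¹ * (Bv i * Bv j) := by
    rw [Matrix.mul_smul, Matrix.mul_one, Matrix.smul_mul]
    ext i j
    simp [Matrix.mul_apply, Finset.sum_const]
    ring
  rw [hBC]
  have hS : (x • 1 - A5) - (Matrix.of fun i j => (m : ℝ) * x⁻¹ * (Bv i * Bv j))
      = !![x - m*x⁻¹,-1,-1,-1,-1; -1,x,-1,0,0; -1,-1,x,0,0; -1,0,0,x,1; -1,0,0,1,x] := by
    ext i j
    fin_cases i <;> fin_cases j <;>
      simp [A5, natSign, Bv, Matrix.one_apply, Matrix.vecHead, Matrix.vecTail] <;> ring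
  rw [hS, det5, Matrix.det_smul, Matrix.det_one]
  have hmr : ((m:ℝ)) = (n:ℝ) - 5 := by
    have h := congrArg (fun k : ℕ => (k:ℝ)) h5
    push_cast at h
    linarith
  have hcard : Fintype.card (Fin m) = m := Fintype.card_fin m
  rw [hcard, hmr]
  have hm6 : m = (n - 6) + 1 := by omega
  rw [hm6, pow_succ]
  field_simp
  ring

lemma charpoly_formula (n : ℕ) (hn : 7 ≤ n) :
    (Matrix.of (gamma1Sign n)).charpoly =
      X ^ (n - 6) * (X ^ 2 - 1) * (X ^ 4 - C (n : ℝ) * X ^ 2 + C ((n : ℝ) - 5)) := by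
  apply Polynomial.eq_of_infinite_eval_eq
  have hsub : {x : ℝ | x ≠ 0} ⊆
      {x : ℝ | eval x (Matrix.of (gamma1Sign n)).charpoly =
        eval x (X ^ (n - 6) * (X ^ 2 - 1) * (X ^ 4 - C (n : ℝ) * X ^ 2 + C ((n : ℝ) - 5)))} := by
    intro x hx
    simp only [Set.mem_setOf_eq] at hx ⊢
    rw [eval_charpoly', det_formula n hn x hx]
    simp
  have hinf : ({x : ℝ | x ≠ 0}).Infinite := by
    have : ({(0:ℝ)}ᶜ : Set ℝ).Infinite := (Set.finite_singleton (0:ℝ)).infinite_compl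
    simpa [Set.compl_singleton_eq] using this
  exact hinf.mono hsub

end Aux

/-- `Φ(Γ₁,x) = x^{n−6}(x²−1)(x⁴−nx²+n−5)`, and the index of `Γ₁` is the largest root
of `x⁴ − nx² + n − 5 = 0`. -/
theorem stmt_12 (n : ℕ) (hn : 7 ≤ n) (Γ : SignedGraph n)
    (hΓ : Γ.sign = gamma1Sign n) :
    Γ.adj.charpoly =
      X ^ (n - 6) * (X ^ 2 - 1) *
        (X ^ 4 - C (n : ℝ) * X ^ 2 + C ((n : ℝ) - 5)) ∧
    ∀ lam : ℝ, Γ.IsIndex lam →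
      (lam ^ 4 - (n : ℝ) * lam ^ 2 + (n : ℝ) - 5 = 0 ∧
        ∀ t : ℝ, t ^ 4 - (n : ℝ) * t ^ 2 + (n : ℝ) - 5 = 0 → t ≤ lam) := by
  have hadj : Γ.adj = Matrix.of (gamma1Sign n) := by
    rw [SignedGraph.adj, hΓ]
  have hcp := charpoly_formula n hn
  -- t is an eigenvalue iff the charpoly vanishes at t
  have eig_iff : ∀ t : ℝ,
      (∃ y : Fin n → ℝ, y ≠ 0 ∧ Γ.adj.mulVec y = t • y) ↔
      t ^ (n-6) * (t^2-1) * (t^4 - n*t^2 + ((n:ℝ) - 5)) = 0 := by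
    intro t
    have hdet : (t • (1 : Matrix (Fin n) (Fin n) ℝ) - Γ.adj).det
        = t ^ (n-6) * (t^2-1) * (t^4 - n*t^2 + ((n:ℝ) - 5)) := by
      rw [hadj, ← eval_charpoly', hcp]
      simp
    rw [← hdet, ← Matrix.exists_mulVec_eq_zero_iff]
    constructor
    · rintro ⟨y, hy, h⟩
      exact ⟨y, hy, by
        rw [Matrix.sub_mulVec, Matrix.smul_mulVec, Matrix.one_mulVec, h, sub_self]⟩
    · rintro ⟨y, hy, h⟩
      refine ⟨y, hy, ?_⟩
      rw [Matrix.sub_mulVec, Matrix.smul_mulVec, Matrix.one_mulVec, sub_eq_zero] at h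
      exact h.symm
  constructor
  · rw [hadj]; exact hcp
  · intro lam hlam
    obtain ⟨hev, hmax⟩ := hlam
    have hn7 : (7:ℝ) ≤ (n:ℝ) := by exact_mod_cast hn
    -- there is a root of the quartic in (1, n]
    have hcont : ContinuousOn (fun t : ℝ => t^4 - n*t^2 + ((n:ℝ) - 5)) (Set.Icc 1 n) :=
      (Continuous.continuousOn (by continuity))
    have h1n : (1:ℝ) ≤ (n:ℝ) := by linarith
    have key4 : (n:ℝ)^3 * 1 ≤ (n:ℝ)^3 * (n:ℝ) :=
      mul_le_mul_of_nonneg_left h1n (by positivity)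
    have hmem : (0:ℝ) ∈ Set.Icc ((fun t : ℝ => t^4 - n*t^2 + ((n:ℝ) - 5)) 1)
        ((fun t : ℝ => t^4 - n*t^2 + ((n:ℝ) - 5)) n) := by
      constructor
      · show (1:ℝ)^4 - n*(1:ℝ)^2 + ((n:ℝ) - 5) ≤ 0
        norm_num
      · show (0:ℝ) ≤ (n:ℝ)^4 - n*(n:ℝ)^2 + ((n:ℝ) - 5)
        nlinarith [key4]
    obtain ⟨t₀, ht₀mem, ht₀⟩ := intermediate_value_Icc h1n hcont hmem
    have ht₀root : t₀^4 - n*t₀^2 + ((n:ℝ) - 5) = 0 := ht₀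
    have ht₀gt1 : 1 < t₀ := by
      rcases lt_or_eq_of_le ht₀mem.1 with h | h
      · exact h
      · exfalso; rw [← h] at ht₀root; nlinarith
    -- every root of the quartic is an eigenvalue
    have root_eig : ∀ t : ℝ, t^4 - n*t^2 + ((n:ℝ) - 5) = 0 →
        (∃ y : Fin n → ℝ, y ≠ 0 ∧ Γ.adj.mulVec y = t • y) := by
      intro t ht
      rw [eig_iff t, ht, mul_zero]
    have hlam_ge : t₀ ≤ lam := hmax t₀ (root_eig t₀ ht₀root)
    have hlam_gt1 : 1 < lam := lt_of_lt_of_le ht₀gt1 hlam_ge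
    have hlam_root : lam^4 - n*lam^2 + ((n:ℝ) - 5) = 0 := by
      have hz := (eig_iff lam).mp hev
      have hpow : lam ^ (n-6) ≠ 0 := pow_ne_zero _ (by linarith)
      have hsq : lam^2 - 1 ≠ 0 := by nlinarith
      rcases mul_eq_zero.mp hz with h | h
      · exfalso
        rcases mul_eq_zero.mp h with h' | h'
        · exact hpow h'
        · exact hsq h'
      · exact h
    constructor
    · linarith [hlam_root]
    · intro t ht
      exact hmax t (root_eig t (by linarith [ht]))
end

section
/- For n ≥ 36, let λ_2 be the largest root of f_2(x) = x⁴ − (n+1)x² + 2n − 4 and λ_3 the largest root of f_3(x) = x⁴ − (n+1)x² + 4x + 2n − 8. Then λ_3 < λ_2, and both λ_2 > √(n−2) and λ_3 > √(n−2). -/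
lemma ivt_aux (g : ℝ → ℝ) (hg : Continuous g) {a b : ℝ} (hab : a ≤ b)
    (ha : g a ≤ 0) (hb : 0 ≤ g b) : ∃ t ∈ Set.Icc a b, g t = 0 := by
  have h := intermediate_value_Icc hab hg.continuousOn ⟨ha, hb⟩
  obtain ⟨t, ht, hgt⟩ := h
  exact ⟨t, ht, hgt⟩

set_option maxHeartbeats 1000000 in
/-- For `n ≥ 36`, the largest root `λ₃` of `f₃(x) = x⁴ − (n+1)x² + 4x + 2n − 8` is less
than the largest root `λ₂` of `f₂(x) = x⁴ − (n+1)x² + 2n − 4`, and both exceed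
`√(n−2)`. -/
theorem stmt_15 (n : ℕ) (hn : 36 ≤ n) (l2 l3 : ℝ)
    (h2 : l2 ^ 4 - ((n : ℝ) + 1) * l2 ^ 2 + 2 * (n : ℝ) - 4 = 0)
    (h2max : ∀ t : ℝ, t ^ 4 - ((n : ℝ) + 1) * t ^ 2 + 2 * (n : ℝ) - 4 = 0 → t ≤ l2)
    (h3 : l3 ^ 4 - ((n : ℝ) + 1) * l3 ^ 2 + 4 * l3 + 2 * (n : ℝ) - 8 = 0)
    (h3max : ∀ t : ℝ, t ^ 4 - ((n : ℝ) + 1) * t ^ 2 + 4 * t + 2 * (n : ℝ) - 8 = 0 → t ≤ l3) :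
    l3 < l2 ∧ Real.sqrt ((n : ℝ) - 2) < l2 ∧ Real.sqrt ((n : ℝ) - 2) < l3 := by
  have hnR : (36 : ℝ) ≤ (n : ℝ) := by exact_mod_cast hn
  set s := Real.sqrt ((n : ℝ) - 2) with hs
  have hs0 : 0 ≤ s := Real.sqrt_nonneg _
  have hs2 : s ^ 2 = (n : ℝ) - 2 := by
    rw [hs, Real.sq_sqrt]; linarith
  have hs1 : 1 < s := by nlinarith
  have hsn : s ≤ (n : ℝ) := by nlinarith
  -- continuity
  have hg2 : Continuous (fun x : ℝ => x ^ 4 - ((n : ℝ) + 1) * x ^ 2 + 2 * (n : ℝ) - 4) := by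
    continuity
  have hg3 : Continuous (fun x : ℝ => x ^ 4 - ((n : ℝ) + 1) * x ^ 2 + 4 * x + 2 * (n : ℝ) - 8) := by
    continuity
  -- values at endpoints
  have hv2s : s ^ 4 - ((n : ℝ) + 1) * s ^ 2 + 2 * (n : ℝ) - 4 ≤ 0 := by nlinarith
  have hn0 : (0:ℝ) ≤ (n : ℝ) := by linarith
  have hcube : 0 ≤ ((n:ℝ) - 36) * (n:ℝ) * (n:ℝ) * (n:ℝ) :=
    mul_nonneg (mul_nonneg (mul_nonneg (by linarith) hn0) hn0) hn0
  have hsq36 : 0 ≤ ((n:ℝ) - 36) * (n:ℝ) * (n:ℝ) :=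
    mul_nonneg (mul_nonneg (by linarith) hn0) hn0
  have hv2n : 0 ≤ (n : ℝ) ^ 4 - ((n : ℝ) + 1) * (n : ℝ) ^ 2 + 2 * (n : ℝ) - 4 := by
    nlinarith [hcube, hsq36]
  have h4s : 4 * s < (n : ℝ) + 2 := by nlinarith [sq_nonneg (4 * s - ((n : ℝ) + 2))]
  have hv3s : s ^ 4 - ((n : ℝ) + 1) * s ^ 2 + 4 * s + 2 * (n : ℝ) - 8 ≤ 0 := by nlinarith
  have hv3n : 0 ≤ (n : ℝ) ^ 4 - ((n : ℝ) + 1) * (n : ℝ) ^ 2 + 4 * (n : ℝ) + 2 * (n : ℝ) - 8 := by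
    nlinarith [hcube, hsq36]
  -- l2 > s
  obtain ⟨t2, ht2, ht2z⟩ := ivt_aux _ hg2 hsn hv2s hv2n
  have hst2 : s < t2 := by
    rcases lt_or_eq_of_le ht2.1 with h | h
    · exact h
    · exfalso; rw [← h] at ht2z; nlinarith
  have hl2s : s < l2 := lt_of_lt_of_le hst2 (h2max t2 ht2z)
  -- l3 > s
  obtain ⟨t3, ht3, ht3z⟩ := ivt_aux _ hg3 hsn hv3s hv3n
  have hst3 : s < t3 := by
    rcases lt_or_eq_of_le ht3.1 with h | h
    · exact h
    · exfalso; rw [← h] at ht3z; nlinarith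
  have hl3s : s < l3 := lt_of_lt_of_le hst3 (h3max t3 ht3z)
  have hl31 : 1 < l3 := lt_trans hs1 hl3s
  -- l3 ≤ n
  have hl3n : l3 ≤ (n : ℝ) := by
    by_contra h
    push_neg at h
    have hl3pos : (0:ℝ) < l3 := by linarith
    have hsq : (n:ℝ)^2 < l3^2 := by nlinarith
    have hA := mul_lt_mul_of_pos_right hsq (show (0:ℝ) < l3^2 by positivity)
    have hB : (0:ℝ) < ((n:ℝ)^2 - (n:ℝ) - 1) * l3^2 :=
      mul_pos (by nlinarith) (by positivity)
    nlinarith [hA, hB]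
  -- f2(l3) < 0
  have hv2l3 : l3 ^ 4 - ((n : ℝ) + 1) * l3 ^ 2 + 2 * (n : ℝ) - 4 ≤ 0 := by nlinarith
  obtain ⟨t, ht, htz⟩ := ivt_aux _ hg2 hl3n hv2l3 hv2n
  have hl3t : l3 < t := by
    rcases lt_or_eq_of_le ht.1 with h | h
    · exact h
    · exfalso; rw [← h] at htz; nlinarith
  exact ⟨lt_of_lt_of_le hl3t (h2max t htz), hl2s, hl3s⟩
end

section
/- For n ≥ 36, let λ_4 be the largest root of f_4(x) = x³ + x² − (n−1)x − n + 5 and λ_5 the largest root of f_5(x) = x³ − x² − (n−2)x + n − 4. Then λ_4 > λ_5. -/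
/-- For `n ≥ 36`, the largest root `λ₄` of `f₄(x) = x³ + x² − (n−1)x − n + 5` exceeds
the largest root `λ₅` of `f₅(x) = x³ − x² − (n−2)x + n − 4`. -/
theorem stmt_16 (n : ℕ) (hn : 36 ≤ n) (l4 l5 : ℝ)
    (h4 : l4 ^ 3 + l4 ^ 2 - ((n : ℝ) - 1) * l4 - (n : ℝ) + 5 = 0)
    (h4max : ∀ t : ℝ, t ^ 3 + t ^ 2 - ((n : ℝ) - 1) * t - (n : ℝ) + 5 = 0 → t ≤ l4)
    (h5 : l5 ^ 3 - l5 ^ 2 - ((n : ℝ) - 2) * l5 + (n : ℝ) - 4 = 0)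
    (h5max : ∀ t : ℝ, t ^ 3 - t ^ 2 - ((n : ℝ) - 2) * t + (n : ℝ) - 4 = 0 → t ≤ l5) :
    l5 < l4 := by
  have hn' : (36 : ℝ) ≤ (n : ℝ) := by exact_mod_cast hn
  -- Step A : l5 > 1, via a root of f5 in (1, 2n)
  set f5 : ℝ → ℝ := fun x => x ^ 3 - x ^ 2 - ((n : ℝ) - 2) * x + (n : ℝ) - 4 with hf5
  have hcont5 : Continuous f5 := by fun_prop
  have h1lt2n : (1 : ℝ) ≤ 2 * (n : ℝ) := by linarith
  have hiv5 : Set.Icc (f5 1) (f5 (2 * n)) ⊆ f5 '' Set.Icc 1 (2 * n) :=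
    intermediate_value_Icc h1lt2n hcont5.continuousOn
  have h0mem : (0 : ℝ) ∈ Set.Icc (f5 1) (f5 (2 * n)) := by
    constructor
    · show (1:ℝ)^3 - 1^2 - ((n:ℝ)-2)*1 + n - 4 ≤ 0; ring_nf; linarith
    · show (0:ℝ) ≤ (2*(n:ℝ))^3 - (2*n)^2 - ((n:ℝ)-2)*(2*n) + n - 4; nlinarith
  obtain ⟨t, ht, htz⟩ := hiv5 h0mem
  have hl51 : 1 < l5 := by
    have ht5 : t ^ 3 - t ^ 2 - ((n : ℝ) - 2) * t + (n : ℝ) - 4 = 0 := htz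
    have := h5max t ht5
    rcases eq_or_lt_of_le ht.1 with h | h
    · exfalso; rw [← h] at ht5; nlinarith [ht5]
    · linarith
  -- Step B : g(l5) = 2 l5² - l5 - 2n + 9 < 0
  have hg : 2 * l5 ^ 2 - l5 - 2 * (n : ℝ) + 9 < 0 := by
    by_contra hge
    push_neg at hge
    nlinarith [mul_pos (sub_pos.mpr hl51) (sub_pos.mpr hl51), sq_nonneg (l5 - 1),
      mul_nonneg hge (le_of_lt (sub_pos.mpr hl51)), sq_nonneg l5, sq_nonneg (l5 - 6)]
  -- f4(l5) < 0
  have hf4l5 : l5 ^ 3 + l5 ^ 2 - ((n : ℝ) - 1) * l5 - (n : ℝ) + 5 < 0 := by nlinarith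
  -- l5 ≤ 2n
  have hl5le : l5 ≤ 2 * (n : ℝ) := by nlinarith
  -- Step C : IVT for f4 on [l5, 2n]
  set f4 : ℝ → ℝ := fun x => x ^ 3 + x ^ 2 - ((n : ℝ) - 1) * x - (n : ℝ) + 5 with hf4
  have hcont4 : Continuous f4 := by fun_prop
  have hiv4 : Set.Icc (f4 l5) (f4 (2 * n)) ⊆ f4 '' Set.Icc l5 (2 * n) :=
    intermediate_value_Icc hl5le hcont4.continuousOn
  have h0mem4 : (0 : ℝ) ∈ Set.Icc (f4 l5) (f4 (2 * n)) := by
    constructor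
    · exact le_of_lt hf4l5
    · show (0:ℝ) ≤ (2*(n:ℝ))^3 + (2*n)^2 - ((n:ℝ)-1)*(2*n) - n + 5; nlinarith
  obtain ⟨s, hs, hsz⟩ := hiv4 h0mem4
  have hs4 : s ^ 3 + s ^ 2 - ((n : ℝ) - 1) * s - (n : ℝ) + 5 = 0 := hsz
  have hsl4 := h4max s hs4
  rcases eq_or_lt_of_le hs.1 with h | h
  · exfalso; rw [← h] at hs4; linarith
  · linarith
end

section
/- For n ≥ 36 and for x ≥ λ_3 (the largest root of f_3(x) = x⁴ − (n+1)x² + 4x + 2n − 8, which satisfies λ_3 > √(n−2)), one has 3x² − 4x − n + 5 > 0; consequently the largest root λ_4 of f_4(x) = x³ + x² − (n−1)x − n + 5 satisfies λ_4 < λ_3, given that x^{n−6}·(x+1)(x−1)²·f_4(x) − x^{n−4}·f_3(x) = x^{n−6}(3x² − 4x − n + 5). -/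
/-- For `n ≥ 36` and `x ≥ λ₃` (the largest root of `f₃`, which satisfies
`λ₃ > √(n−2)`), one has `3x² − 4x − n + 5 > 0`; consequently, given the identity
`x^{n−6}(x+1)(x−1)²·f₄(x) − x^{n−4}·f₃(x) = x^{n−6}(3x² − 4x − n + 5)`, the largest
root `λ₄` of `f₄(x) = x³ + x² − (n−1)x − n + 5` satisfies `λ₄ < λ₃`. -/
theorem stmt_17 (n : ℕ) (hn : 36 ≤ n) (l3 l4 : ℝ)
    (h3 : l3 ^ 4 - ((n : ℝ) + 1) * l3 ^ 2 + 4 * l3 + 2 * (n : ℝ) - 8 = 0)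
    (h3max : ∀ t : ℝ, t ^ 4 - ((n : ℝ) + 1) * t ^ 2 + 4 * t + 2 * (n : ℝ) - 8 = 0 → t ≤ l3)
    (h3sqrt : Real.sqrt ((n : ℝ) - 2) < l3)
    (h4 : l4 ^ 3 + l4 ^ 2 - ((n : ℝ) - 1) * l4 - (n : ℝ) + 5 = 0)
    (h4max : ∀ t : ℝ, t ^ 3 + t ^ 2 - ((n : ℝ) - 1) * t - (n : ℝ) + 5 = 0 → t ≤ l4)
    (hid : ∀ x : ℝ,
      x ^ (n - 6) * (x + 1) * (x - 1) ^ 2 *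
          (x ^ 3 + x ^ 2 - ((n : ℝ) - 1) * x - (n : ℝ) + 5)
        - x ^ (n - 4) * (x ^ 4 - ((n : ℝ) + 1) * x ^ 2 + 4 * x + 2 * (n : ℝ) - 8)
        = x ^ (n - 6) * (3 * x ^ 2 - 4 * x - (n : ℝ) + 5)) :
    (∀ x : ℝ, l3 ≤ x → 0 < 3 * x ^ 2 - 4 * x - (n : ℝ) + 5) ∧ l4 < l3 := by

  have hn' : (36:ℝ) ≤ (n:ℝ) := by exact_mod_cast hn
  have hsq : Real.sqrt ((n : ℝ) - 2) ^ 2 = (n : ℝ) - 2 := Real.sq_sqrt (by linarith)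
  have hs0 : 0 ≤ Real.sqrt ((n : ℝ) - 2) := Real.sqrt_nonneg _
  have h4s : (4:ℝ) < Real.sqrt ((n : ℝ) - 2) := by
    nlinarith [hsq, hs0]
  have hl34 : (4:ℝ) < l3 := lt_trans h4s h3sqrt
  have hl3sq : (n : ℝ) - 2 < l3 ^ 2 := by nlinarith [hsq, hs0]
  have part1 : ∀ x : ℝ, l3 ≤ x → 0 < 3 * x ^ 2 - 4 * x - (n : ℝ) + 5 := by
    intro x hx
    have hx4 : (4:ℝ) < x := lt_of_lt_of_le hl34 hx
    have hx2 : (n : ℝ) - 2 < x ^ 2 := by nlinarith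
    nlinarith
  refine ⟨part1, ?_⟩
  have hg3 := part1 l3 le_rfl
  have hid3 := hid l3
  rw [h3, mul_zero, sub_zero] at hid3
  have hpow : 0 < l3 ^ (n - 6) := pow_pos (by linarith) _
  have hA : 0 < l3 ^ (n - 6) * (l3 + 1) * (l3 - 1) ^ 2 := by
    apply mul_pos (mul_pos hpow (by linarith))
    exact pow_pos (by linarith : (0:ℝ) < l3 - 1) 2
  have hF : 0 < l3 ^ 3 + l3 ^ 2 - ((n : ℝ) - 1) * l3 - (n : ℝ) + 5 := by
    by_contra hF
    push_neg at hF
    nlinarith [mul_nonpos_of_nonneg_of_nonpos hA.le hF, mul_pos hpow hg3]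
  by_contra hle
  push_neg at hle
  have hbr : 0 ≤ l4 ^ 2 + l4 * l3 + l3 ^ 2 + l4 + l3 - (n : ℝ) + 1 := by
    nlinarith
  nlinarith [mul_nonneg (sub_nonneg.2 hle) hbr]
end

section
/- Let Γ be a connected signed graph and x a unit eigenvector for the index λ(Γ). Suppose Γ has a cut edge uv, and let U be the vertex set of the component of Γ − uv containing v. If Σ_{w ∈ N_Γ(v)\{u}} σ(vw)·x_w < 0 and x_v > 0, then x is not a maximizer of the Rayleigh quotient; more precisely, the vector y obtained from x by negating all coordinates on U \ {v} satisfies yᵀA(Γ)y − xᵀA(Γ)x = −4·x_v·Σ_{w ∈ N_Γ(v)\{u}} σ(vw)·x_w > 0, contradicting that λ(Γ) = max of the Rayleigh quotient. Hence Σ_{w ∈ N_Γ(v)\{u}} σ(vw)·x_w ≥ 0 whenever x_v > 0. -/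
open Matrix in
lemma rayleigh_le' {n : ℕ} (A : Matrix (Fin n) (Fin n) ℝ) (hA : A.IsHermitian) (lam : ℝ)
    (h : ∀ μ : ℝ, (∃ z : Fin n → ℝ, z ≠ 0 ∧ A.mulVec z = μ • z) → μ ≤ lam)
    (z : Fin n → ℝ) : z ⬝ᵥ A.mulVec z ≤ lam * (z ⬝ᵥ z) := by
  classical
  set b := hA.eigenvectorBasis with hb
  have hmu : ∀ i, hA.eigenvalues i ≤ lam := fun i =>
    h _ ⟨⇑(b i), (WithLp.ofLp_eq_zero 2).not.mpr (b.orthonormal.ne_zero i), hA.mulVec_eigenvectorBasis i⟩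
  have hAT : Aᵀ = A := hA
  have key : ∀ i, ⇑(b i) ⬝ᵥ A.mulVec z = hA.eigenvalues i * (⇑(b i) ⬝ᵥ z) := by
    intro i
    rw [Matrix.dotProduct_mulVec, ← Matrix.mulVec_transpose, hAT,
      hA.mulVec_eigenvectorBasis, smul_dotProduct, smul_eq_mul]
  set z' : EuclideanSpace ℝ (Fin n) := WithLp.toLp 2 z with hz'
  have hinner : ∀ (a : EuclideanSpace ℝ (Fin n)) (w : EuclideanSpace ℝ (Fin n)),
      (inner ℝ a w : ℝ) = (a : Fin n → ℝ) ⬝ᵥ (w : Fin n → ℝ) := by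
    intro a w
    simp [PiLp.inner_apply, RCLike.inner_apply, dotProduct]
    exact Finset.sum_congr rfl fun i _ => mul_comm _ _
  have hrepr : ∀ (w : EuclideanSpace ℝ (Fin n)),
      (z : Fin n → ℝ) ⬝ᵥ (w : Fin n → ℝ) = ∑ i, b.repr z' i * b.repr w i := by
    intro w
    show (z' : Fin n → ℝ) ⬝ᵥ (w : Fin n → ℝ) = _
    have h1 : (inner ℝ z' w : ℝ) = inner ℝ (b.repr z') (b.repr w) :=
      (b.repr.inner_map_map z' w).symm
    rw [← hinner z' w, h1]
    simp only [PiLp.inner_apply, RCLike.inner_apply, conj_trivial]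
    exact Finset.sum_congr rfl fun i _ => mul_comm _ _
  have hAw : ∀ i, b.repr (WithLp.toLp 2 (A.mulVec z)) i
      = hA.eigenvalues i * b.repr z' i := by
    intro i
    rw [b.repr_apply_apply, b.repr_apply_apply, hinner, hinner]
    exact key i
  rw [show z ⬝ᵥ A.mulVec z = _ from hrepr (WithLp.toLp 2 (A.mulVec z)), show z ⬝ᵥ z = _ from hrepr z']
  have : ∑ i, b.repr z' i * b.repr (WithLp.toLp 2 (A.mulVec z)) i
      = ∑ i, hA.eigenvalues i * (b.repr z' i)^2 := by
    refine Finset.sum_congr rfl fun i _ => ?_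
    rw [hAw i]; ring
  rw [this, Finset.mul_sum]
  refine Finset.sum_le_sum fun i _ => ?_
  nlinarith [hmu i, sq_nonneg (b.repr z' i)]

open Matrix in
open Classical in
theorem stmt19_diff {n : ℕ} (Γ : SignedGraph n) (hconn : Γ.graph.Connected)
    (u v : Fin n) (hadj : Γ.graph.Adj u v)
    (hcut : ¬ (Γ.graph.deleteEdges {s(u, v)}).Reachable u v)
    (x : Fin n → ℝ)
    (U : Set (Fin n)) (hU : U = {w | (Γ.graph.deleteEdges {s(u, v)}).Reachable v w})
    (S : ℝ) (hS : S = ∑ w ∈ Finset.univ \ {u}, Γ.sign v w * x w)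
    (y : Fin n → ℝ) (hy : y = fun i => if i ∈ U ∧ i ≠ v then -x i else x i) :
    y ⬝ᵥ Γ.adj.mulVec y - x ⬝ᵥ Γ.adj.mulVec x = -4 * x v * S := by
  classical
  have huU : u ∉ U := by
    rw [hU]; intro h; exact hcut h.symm
  have hvU : v ∈ U := by rw [hU]; exact SimpleGraph.Reachable.refl v
  -- any edge from U∖{v} leaving U∖{v} goes to v
  have hedge : ∀ i j : Fin n, Γ.sign i j ≠ 0 → (i ∈ U ∧ i ≠ v) → ¬(j ∈ U ∧ j ≠ v) → j = v := by
    intro i j hsig hi hj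
    by_contra hjv
    have hjU : j ∉ U := fun h => hj ⟨h, hjv⟩
    have hne : s(i, j) ≠ s(u, v) := by
      intro h
      rw [Sym2.eq_iff] at h
      rcases h with ⟨hiu, hjv'⟩ | ⟨hiv, hju⟩
      · exact hjv hjv'
      · exact hi.2 hiv
    have hadj' : (Γ.graph.deleteEdges {s(u, v)}).Adj i j := by
      rw [SimpleGraph.deleteEdges_adj]
      exact ⟨hsig, by simpa using hne⟩
    have : j ∈ U := by
      rw [hU]
      have hiv : (Γ.graph.deleteEdges {s(u, v)}).Reachable v i := by rw [hU] at hi; exact hi.1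
      exact hiv.trans hadj'.reachable
    exact hjU this
  -- edges from v not to u have other end in U∖{v}
  have hvedge : ∀ w : Fin n, Γ.sign v w ≠ 0 → w ≠ u → (w ∈ U ∧ w ≠ v) := by
    intro w hsig hwu
    have hwv : w ≠ v := by intro h; rw [h] at hsig; exact hsig (Γ.loopless v)
    refine ⟨?_, hwv⟩
    have hne : s(v, w) ≠ s(u, v) := by
      intro h
      rw [Sym2.eq_iff] at h
      rcases h with ⟨hvu, hwv'⟩ | ⟨hvv, hwu'⟩
      · exact hwv hwv'
      · exact hwu hwu'
    have hadj' : (Γ.graph.deleteEdges {s(u, v)}).Adj v w := by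
      rw [SimpleGraph.deleteEdges_adj]
      exact ⟨hsig, by simpa using hne⟩
    rw [hU]
    exact hadj'.reachable
  set P : Fin n → Prop := fun i => i ∈ U ∧ i ≠ v with hP
  have hyi : ∀ i, y i = if P i then -x i else x i := by intro i; rw [hy]
  -- T equals S
  have hTS : (∑ w, if P w then Γ.sign v w * x w else 0) = S := by
    rw [hS]
    rw [← Finset.sum_subset (Finset.sdiff_subset (s := Finset.univ) (t := {u}))
      (fun w _ hw => ?_)]
    · refine Finset.sum_congr rfl fun w hw => ?_
      rw [Finset.mem_sdiff, Finset.mem_singleton] at hw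
      by_cases hPw : P w
      · rw [if_pos hPw]
      · rw [if_neg hPw]
        by_cases hsig : Γ.sign v w = 0
        · rw [hsig, zero_mul]
        · exact absurd (hvedge w hsig hw.2) hPw
    · simp only [Finset.mem_sdiff, Finset.mem_singleton, not_and, not_not] at hw
      have : w = u := hw (Finset.mem_univ w)
      rw [if_neg (by rw [this]; exact fun h => huU h.1)]
  -- main computation
  have expand : ∀ z : Fin n → ℝ, z ⬝ᵥ Γ.adj.mulVec z = ∑ i, ∑ j, z i * Γ.sign i j * z j := by
    intro z
    simp only [dotProduct, Matrix.mulVec, SignedGraph.adj, Matrix.of_apply,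
      Finset.mul_sum, dotProduct]
    exact Finset.sum_congr rfl fun i _ => Finset.sum_congr rfl fun j _ => by ring
  rw [expand, expand, ← Finset.sum_sub_distrib]
  have termwise : ∀ i j : Fin n,
      (∑ j', y i * Γ.sign i j' * y j') - (∑ j', x i * Γ.sign i j' * x j') = 0 ∨ True := fun _ _ => Or.inr trivial
  have key : ∀ i j : Fin n, y i * Γ.sign i j * y j - x i * Γ.sign i j * x j
      = (if P i ∧ j = v then -2 * (Γ.sign i j * x i * x j) else 0)
        + (if i = v ∧ P j then -2 * (Γ.sign i j * x i * x j) else 0) := by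
    intro i j
    rw [hyi i, hyi j]
    by_cases hi : P i <;> by_cases hj : P j
    · rw [if_pos hi, if_pos hj, if_neg (fun h => hj.2 h.2), if_neg (fun h => hi.2 h.1)]
      ring
    · rw [if_pos hi, if_neg hj]
      by_cases hjv : j = v
      · rw [if_pos ⟨hi, hjv⟩, if_neg (fun h => hi.2 h.1)]; ring
      · rw [if_neg (fun h => hjv h.2), if_neg (fun h => hj h.2)]
        by_cases hsig : Γ.sign i j = 0
        · rw [hsig]; ring
        · exact absurd (hedge i j hsig hi hj) hjv
    · rw [if_neg hi, if_pos hj]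
      by_cases hiv : i = v
      · rw [if_neg (fun h => hi h.1), if_pos ⟨hiv, hj⟩]
        ring
      · rw [if_neg (fun h => hi h.1), if_neg (fun h => hiv h.1)]
        by_cases hsig : Γ.sign i j = 0
        · rw [hsig]; ring
        · have := hedge j i (by rw [Γ.symm j i]; exact hsig) hj hi
          exact absurd this hiv
    · rw [if_neg hi, if_neg hj, if_neg (fun h => hi h.1), if_neg (fun h => hj h.2)]
      ring
  have h1 : ∀ i : Fin n, (∑ j, if P i ∧ j = v then -2 * (Γ.sign i j * x i * x j) else 0)
      = (if P i then -2 * (Γ.sign i v * x i * x v) else 0) := by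
    intro i
    by_cases hi : P i
    · rw [if_pos hi]
      have hcond : ∀ j : Fin n, (if P i ∧ j = v then -2 * (Γ.sign i j * x i * x j) else 0)
          = (if j = v then -2 * (Γ.sign i j * x i * x j) else 0) := fun j => by
        by_cases hj : j = v
        · rw [if_pos ⟨hi, hj⟩, if_pos hj]
        · rw [if_neg (fun h => hj h.2), if_neg hj]
      rw [Finset.sum_congr rfl (fun j _ => hcond j),
        Finset.sum_ite_eq' Finset.univ v (fun j => -2 * (Γ.sign i j * x i * x j))]
      simp
    · simp [hi]
  have h2a : ∀ i : Fin n, (∑ j, if i = v ∧ P j then -2 * (Γ.sign i j * x i * x j) else 0)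
      = if i = v then (∑ j, if P j then -2 * (Γ.sign v j * x v * x j) else 0) else 0 := by
    intro i
    by_cases hiv : i = v
    · subst hiv; simp
    · simp [hiv]
  have split : ∑ i, ∑ j, (y i * Γ.sign i j * y j - x i * Γ.sign i j * x j)
      = (∑ i, ∑ j, (if P i ∧ j = v then -2 * (Γ.sign i j * x i * x j) else 0))
        + (∑ i, ∑ j, (if i = v ∧ P j then -2 * (Γ.sign i j * x i * x j) else 0)) := by
    simp only [key, Finset.sum_add_distrib]
  have e1 : (∑ i, ∑ j, if P i ∧ j = v then -2 * (Γ.sign i j * x i * x j) else 0)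
      = -2 * x v * S := by
    simp only [h1]
    rw [← hTS, Finset.mul_sum]
    refine Finset.sum_congr rfl fun i _ => ?_
    by_cases hi : P i
    · rw [if_pos hi, if_pos hi, Γ.symm i v]; ring
    · rw [if_neg hi, if_neg hi, mul_zero]
  have e2 : (∑ i, ∑ j, if i = v ∧ P j then -2 * (Γ.sign i j * x i * x j) else 0)
      = -2 * x v * S := by
    simp only [h2a]
    rw [Finset.sum_ite_eq' Finset.univ v
      (fun _ => (∑ j, if P j then -2 * (Γ.sign v j * x v * x j) else 0))]
    rw [if_pos (Finset.mem_univ v), ← hTS, Finset.mul_sum]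
    refine Finset.sum_congr rfl fun j _ => ?_
    by_cases hj : P j
    · rw [if_pos hj, if_pos hj]; ring
    · rw [if_neg hj, if_neg hj, mul_zero]
  have comb : ∀ i : Fin n,
      (∑ j, y i * Γ.sign i j * y j) - (∑ j, x i * Γ.sign i j * x j)
      = ∑ j, (y i * Γ.sign i j * y j - x i * Γ.sign i j * x j) := fun i =>
    (Finset.sum_sub_distrib _ _).symm
  calc ∑ i, ((∑ j, y i * Γ.sign i j * y j) - ∑ j, x i * Γ.sign i j * x j)
      = ∑ i, ∑ j, (y i * Γ.sign i j * y j - x i * Γ.sign i j * x j) :=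
        Finset.sum_congr rfl fun i _ => comb i
    _ = -2 * x v * S + -2 * x v * S := by rw [split, e1, e2]
    _ = -4 * x v * S := by ring

open Matrix in
open Classical in
/-- For a cut edge `uv` of a connected signed graph with unit index-eigenvector `x`:
negating `x` on `U∖{v}` (`U` the component of `v` in `Γ − uv`) changes the Rayleigh
quotient by `−4·x_v·S`, where `S = Σ_{w ≠ u} σ(vw)·x_w`; hence `S ≥ 0` whenever
`x_v > 0`. -/
theorem stmt_19 {n : ℕ} (Γ : SignedGraph n) (hconn : Γ.graph.Connected)
    (u v : Fin n) (hadj : Γ.graph.Adj u v)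
    (hcut : ¬ (Γ.graph.deleteEdges {s(u, v)}).Reachable u v)
    (lam : ℝ) (hlam : Γ.IsIndex lam)
    (x : Fin n → ℝ) (hunit : ∑ i, x i ^ 2 = 1) (heig : Γ.adj.mulVec x = lam • x)
    (U : Set (Fin n)) (hU : U = {w | (Γ.graph.deleteEdges {s(u, v)}).Reachable v w})
    (S : ℝ) (hS : S = ∑ w ∈ Finset.univ \ {u}, Γ.sign v w * x w)
    (y : Fin n → ℝ) (hy : y = fun i => if i ∈ U ∧ i ≠ v then -x i else x i) :
    (y ⬝ᵥ Γ.adj.mulVec y - x ⬝ᵥ Γ.adj.mulVec x = -4 * x v * S) ∧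
    (0 < x v → 0 ≤ S) := by
  have hdiff := stmt19_diff Γ hconn u v hadj hcut x U hU S hS y hy
  refine ⟨hdiff, fun hxv => ?_⟩
  by_contra hSneg
  push_neg at hSneg
  have hherm : Γ.adj.IsHermitian := by
    ext i j
    simp [Matrix.conjTranspose_apply, SignedGraph.adj, Γ.symm i j]
  have hxx : x ⬝ᵥ Γ.adj.mulVec x = lam := by
    rw [heig]
    have : x ⬝ᵥ (lam • x) = lam * ∑ i, x i ^ 2 := by
      simp only [dotProduct, Pi.smul_apply, smul_eq_mul, Finset.mul_sum]
      exact Finset.sum_congr rfl fun i _ => by ring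
    rw [this, hunit, mul_one]
  have hyy : y ⬝ᵥ y = 1 := by
    simp only [dotProduct]
    rw [← hunit]
    refine Finset.sum_congr rfl fun i _ => ?_
    rw [hy]
    dsimp only
    split_ifs <;> ring
  have hray := rayleigh_le' Γ.adj hherm lam hlam.2 y
  rw [hyy, mul_one] at hray
  have hpos : 0 < -4 * x v * S := by nlinarith [mul_pos hxv (neg_pos.mpr hSneg)]
  linarith [hdiff, hray, hxx, hpos]
end
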